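/- Let H₊ and H₋ be complex Hilbert spaces, H = H₊ × H₋ with its standard form ω. Let N be a maximal completely positive-definite closed subspace of H and let L be a closed subspace that is Lagrangian, i.e. L = L^⊥s. Then N and L are transversal in H: N ∩ L = {0} and N + L = H. -/

import Mathlib

noncomputable section

open Complex

variable {Hp Hm : Type*}
  [NormedAddCommGroup Hp] [InnerProductSpace ℂ Hp] [CompleteSpace Hp]
  [NormedAddCommGroup Hm] [InnerProductSpace ℂ Hm] [CompleteSpace Hm]

/-- The standard strong symplectic form `ω((x₁,x₂),(y₁,y₂)) = i⟨x₁,y₁⟩ − i⟨x₂,y₂⟩` on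
`H₊ × H₋`, linear in the first argument and conjugate-linear in the second.
(Since Mathlib's `inner` is conjugate-linear in its *first* argument, the paper's
`⟨a,b⟩` is `inner b a`.) -/
def stdForm (x y : Hp × Hm) : ℂ :=
  Complex.I * (inner ℂ y.1 x.1 : ℂ) - Complex.I * (inner ℂ y.2 x.2 : ℂ)

/-- The symplectic complement of a set `M ⊆ H₊ × H₋`:
`M^⊥s = {y : ω(x,y) = 0 for all x ∈ M}`. -/
def symCompl (M : Set (Hp × Hm)) : Set (Hp × Hm) := {y | ∀ x ∈ M, stdForm x y = 0}

/-- `M` is a completely positive-definite closed subspace. -/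
def IsCPD (M : Submodule ℂ (Hp × Hm)) : Prop :=
  IsClosed (M : Set (Hp × Hm)) ∧
    ∃ c : ℝ, 0 < c ∧ ∀ x ∈ M, c * ‖x‖ ^ 2 ≤ (-Complex.I * stdForm x x).re

/-- `M` is a maximal completely positive-definite subspace. -/
def IsMaxCPD (M : Submodule ℂ (Hp × Hm)) : Prop :=
  IsCPD M ∧ ∀ N : Submodule ℂ (Hp × Hm), IsCPD N → M ≤ N → N = M

/-!
Write `‖·‖` for the sup norm on `H₊ × H₋`. Since `-iω(x,x) = ‖x₁‖² - ‖x₂‖²`, a closed subspace is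
completely positive-definite iff `‖x₂‖ ≤ k‖x₁‖` on it for some `k < 1`. If `N` is maximal, its first
projection is closed and dense (a vector orthogonal to it can be added to `N`), hence all of `H₊`,
so `N` is the graph of a linear map `T : H₊ → H₋` with `‖T‖ ≤ k`. A Lagrangian `L` is neutral,
`‖x₁‖ = ‖x₂‖`, and its second projection is closed and dense (a vector `(0, b)` with `b`
orthogonal to it lies in `L^⊥s = L`, so `b = 0`), so `L` is the graph of a contraction
`V : H₋ → H₊` over `H₋`. Neutrality against `‖x₂‖ ≤ k‖x₁‖` gives `N ∩ L = 0`, and since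
`‖VT‖ < 1` the equation `(x, Tx) + (Vw, w) = p` is solved by inverting `1 - VT`.
-/

section Normed

variable {𝕜 E F : Type*} [NontriviallyNormedField 𝕜]
  [NormedAddCommGroup E] [NormedSpace 𝕜 E] [NormedAddCommGroup F] [NormedSpace 𝕜 F]

lemma Submodule.exists_continuousLinearMap_of_norm_snd_le (M : Submodule 𝕜 (E × F)) (k : ℝ)
    (hM : ∀ x ∈ M, ‖x.2‖ ≤ k * ‖x.1‖) (hfst : M.map (LinearMap.fst 𝕜 E F) = ⊤) :
    ∃ T : E →L[𝕜] F, (∀ u, (u, T u) ∈ M) ∧ ∀ u, ‖T u‖ ≤ k * ‖u‖ := by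
  have hex : ∀ u : E, ∃ v, (u, v) ∈ M := fun u => by
    obtain ⟨x, hx, rfl⟩ : u ∈ M.map (LinearMap.fst 𝕜 E F) := hfst ▸ Submodule.mem_top
    exact ⟨x.2, hx⟩
  have huniq : ∀ u v v', (u, v) ∈ M → (u, v') ∈ M → v = v' := by
    intro u v v' h h'
    have := hM _ (M.sub_mem h h')
    simp only [Prod.fst_sub, Prod.snd_sub, sub_self, norm_zero, mul_zero] at this
    exact sub_eq_zero.1 (norm_le_zero_iff.1 this)
  choose f hf using hex
  let T : E →ₗ[𝕜] F :=
    { toFun := f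
      map_add' := fun u v => huniq _ _ _ (hf _) (by simpa using M.add_mem (hf u) (hf v))
      map_smul' := fun t u => huniq _ _ _ (hf _) (by simpa using M.smul_mem t (hf u)) }
  have hT : ∀ u, ‖T u‖ ≤ k * ‖u‖ := fun u => hM _ (hf u)
  exact ⟨T.mkContinuous k hT, hf, hT⟩

lemma Submodule.isClosed_map_of_norm_map_eq [CompleteSpace E] (M : Submodule 𝕜 E)
    (hM : IsClosed (M : Set E)) (f : E →ₗ[𝕜] F) (hf : ∀ x ∈ M, ‖f x‖ = ‖x‖) :
    IsClosed (M.map f : Set F) := by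
  have : CompleteSpace M := hM.completeSpace_coe
  let g : M →ₗᵢ[𝕜] F := ⟨f.comp M.subtype, fun x => hf x x.2⟩
  rw [Submodule.map_coe, Set.image_eq_range]
  exact g.isometry.isClosedEmbedding.isClosed_range

lemma ContinuousLinearMap.exists_sub_apply_eq_of_norm_lt_one [CompleteSpace E]
    (S : E →L[𝕜] E) (hS : ‖S‖ < 1) (y : E) : ∃ x, x - S x = y := by
  let u := Units.oneSub S hS
  refine ⟨(↑u⁻¹ : E →L[𝕜] E) y, ?_⟩
  simpa [u] using congr($(u.mul_inv) y)

lemma Submodule.inf_eq_bot_of_norm_snd_le {M M' : Submodule 𝕜 (E × F)} {k : ℝ} (hk : k < 1)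
    (hM : ∀ x ∈ M, ‖x.2‖ ≤ k * ‖x.1‖) (hM' : ∀ x ∈ M', ‖x.1‖ ≤ ‖x.2‖) : M ⊓ M' = ⊥ := by
  rw [Submodule.eq_bot_iff]
  rintro x ⟨hx, hx'⟩
  have h1 : ‖x.1‖ = 0 := by nlinarith [hM x hx, hM' x hx', norm_nonneg x.1]
  have h2 : ‖x.2‖ = 0 := by nlinarith [hM x hx, hM' x hx', norm_nonneg x.2]
  exact Prod.ext (norm_eq_zero.1 h1) (norm_eq_zero.1 h2)

lemma Submodule.sup_eq_top_of_graphs [CompleteSpace E] {M M' : Submodule 𝕜 (E × F)}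
    (T : E →L[𝕜] F) (V : F →L[𝕜] E) (hT : ∀ u, (u, T u) ∈ M) (hV : ∀ w, (V w, w) ∈ M')
    (hVT : ‖V.comp T‖ < 1) : M ⊔ M' = ⊤ := by
  rw [Submodule.eq_top_iff']
  intro p
  obtain ⟨x, hx⟩ := (V.comp T).exists_sub_apply_eq_of_norm_lt_one hVT (p.1 - V p.2)
  have hw : (p.1 - x, p.2 - T x) = (V (p.2 - T x), p.2 - T x) := by
    rw [ContinuousLinearMap.comp_apply] at hx
    rw [map_sub]
    congr 1
    linear_combination (norm := module) -hx
  refine Submodule.mem_sup.2 ⟨_, hT x, _, hw ▸ hV (p.2 - T x), ?_⟩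
  ext <;> simp

end Normed

lemma Submodule.eq_top_of_isClosed_of_orthogonal_eq_bot {𝕜 E : Type*} [RCLike 𝕜]
    [NormedAddCommGroup E] [InnerProductSpace 𝕜 E] [CompleteSpace E] (K : Submodule 𝕜 E)
    (hK : IsClosed (K : Set E)) (h : Kᗮ = ⊥) : K = ⊤ :=
  haveI : CompleteSpace K := hK.completeSpace_coe
  Submodule.orthogonal_eq_bot_iff.1 h

lemma norm_le_norm_add_of_inner_eq_zero {𝕜 E : Type*} [RCLike 𝕜] [NormedAddCommGroup E]
    [InnerProductSpace 𝕜 E] {x y : E} (h : inner 𝕜 x y = 0) : ‖x‖ ≤ ‖x + y‖ := by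
  rw [mul_self_le_mul_self_iff (norm_nonneg _) (norm_nonneg _),
    norm_add_sq_eq_norm_sq_add_norm_sq_of_inner_eq_zero x y h]
  exact le_add_of_nonneg_right (mul_self_nonneg _)

section Symplectic

variable {E F : Type*} [NormedAddCommGroup E] [InnerProductSpace ℂ E]
  [NormedAddCommGroup F] [InnerProductSpace ℂ F]

lemma stdForm_self (x : E × F) : stdForm x x = I * ((‖x.1‖ ^ 2 - ‖x.2‖ ^ 2 : ℝ) : ℂ) := by
  simp only [stdForm, inner_self_eq_norm_sq_to_K, RCLike.ofReal_eq_complex_ofReal]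
  push_cast
  ring

lemma re_neg_I_mul_stdForm_self (x : E × F) :
    (-I * stdForm x x).re = ‖x.1‖ ^ 2 - ‖x.2‖ ^ 2 := by
  rw [stdForm_self, ← mul_assoc, neg_mul, I_mul_I, neg_neg, one_mul, ofReal_re]

lemma isCPD_iff (M : Submodule ℂ (E × F)) :
    IsCPD M ↔ IsClosed (M : Set (E × F)) ∧
      ∃ k : ℝ, 0 ≤ k ∧ k < 1 ∧ ∀ x ∈ M, ‖x.2‖ ≤ k * ‖x.1‖ := by
  simp only [IsCPD, re_neg_I_mul_stdForm_self]
  refine and_congr_right fun _ => ⟨fun ⟨c, hc, hM⟩ => ?_, fun ⟨k, hk0, hk1, hM⟩ => ?_⟩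
  · -- `c‖x‖² ≤ ‖x₁‖² - ‖x₂‖²` and `‖x₂‖ ≤ ‖x‖` give `(1 + c)‖x₂‖² ≤ ‖x₁‖²`
    have hk : √(1 / (1 + c)) ^ 2 = 1 / (1 + c) := Real.sq_sqrt (by positivity)
    refine ⟨√(1 / (1 + c)), Real.sqrt_nonneg _, ?_, fun x hx => ?_⟩
    · rw [Real.sqrt_lt' one_pos, one_pow, div_lt_one (by linarith)]
      linarith
    rw [← pow_le_pow_iff_left₀ (norm_nonneg _) (by positivity) two_ne_zero, mul_pow, hk,
      div_mul_eq_mul_div, one_mul, le_div_iff₀ (by linarith)]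
    have h2 : ‖x.2‖ ^ 2 ≤ ‖x‖ ^ 2 := pow_le_pow_left₀ (norm_nonneg _) (norm_snd_le x) 2
    nlinarith [hM x hx]
  · refine ⟨1 - k ^ 2, by nlinarith, fun x hx => ?_⟩
    have h2 := hM x hx
    have h1 : ‖x.2‖ ≤ ‖x.1‖ := h2.trans (mul_le_of_le_one_left (norm_nonneg _) hk1.le)
    rw [Prod.norm_def, max_eq_left h1]
    nlinarith [norm_nonneg x.2]

lemma isCPD_topologicalClosure (M : Submodule ℂ (E × F)) {k : ℝ} (hk0 : 0 ≤ k) (hk1 : k < 1)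
    (hM : ∀ x ∈ M, ‖x.2‖ ≤ k * ‖x.1‖) : IsCPD M.topologicalClosure := by
  refine (isCPD_iff _).2 ⟨M.isClosed_topologicalClosure, k, hk0, hk1, ?_⟩
  have hcl : IsClosed {x : E × F | ‖x.2‖ ≤ k * ‖x.1‖} :=
    isClosed_le continuous_snd.norm (continuous_const.mul continuous_fst.norm)
  exact fun x hx => closure_minimal hM hcl hx

lemma norm_fst_eq_norm_snd_of_mem_lagrangian {L : Submodule ℂ (E × F)}
    (hL : (L : Set (E × F)) = symCompl (L : Set (E × F))) {x : E × F} (hx : x ∈ L) :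
    ‖x.1‖ = ‖x.2‖ := by
  have h : stdForm x x = 0 := (hL ▸ hx : x ∈ symCompl (L : Set (E × F))) x hx
  rw [stdForm_self, mul_eq_zero, Complex.ofReal_eq_zero, sub_eq_zero] at h
  exact (pow_left_inj₀ (norm_nonneg _) (norm_nonneg _) two_ne_zero).1
    (h.resolve_left I_ne_zero)

end Symplectic

lemma IsMaxCPD.map_fst_eq_top {N : Submodule ℂ (Hp × Hm)} (hN : IsMaxCPD N) :
    N.map (LinearMap.fst ℂ Hp Hm) = ⊤ := by
  obtain ⟨hcl, k, hk0, hk1, hk⟩ := (isCPD_iff N).1 hN.1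
  refine Submodule.eq_top_of_isClosed_of_orthogonal_eq_bot _
    (N.isClosed_map_of_norm_map_eq hcl _ fun x hx => ?_) ?_
  · have h1 : ‖x.2‖ ≤ ‖x.1‖ := (hk x hx).trans (mul_le_of_le_one_left (norm_nonneg _) hk1.le)
    simp [Prod.norm_def, max_eq_left h1]
  rw [Submodule.eq_bot_iff]
  intro a ha
  set N' := N ⊔ ℂ ∙ ((a, 0) : Hp × Hm)
  have hN' : ∀ x ∈ N', ‖x.2‖ ≤ k * ‖x.1‖ := by
    intro x hx
    obtain ⟨n, hn, s, hs, rfl⟩ := Submodule.mem_sup.1 hx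
    obtain ⟨t, rfl⟩ := Submodule.mem_span_singleton.1 hs
    have horth : inner ℂ n.1 (t • a) = 0 :=
      Submodule.inner_right_of_mem_orthogonal (Submodule.mem_map_of_mem hn)
        (Submodule.smul_mem _ t ha)
    simpa using (hk n hn).trans
      (mul_le_mul_of_nonneg_left (norm_le_norm_add_of_inner_eq_zero horth) hk0)
  have hN'N := hN.2 _ (isCPD_topologicalClosure N' hk0 hk1 hN')
    (le_sup_left.trans N'.le_topologicalClosure)
  have haN : ((a, 0) : Hp × Hm) ∈ N := hN'N ▸ N'.le_topologicalClosure
    (Submodule.mem_sup_right (Submodule.mem_span_singleton_self _))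
  exact inner_self_eq_zero.1
    (Submodule.inner_right_of_mem_orthogonal (Submodule.mem_map_of_mem haN) ha)

lemma exists_continuousLinearMap_of_eq_symCompl {L : Submodule ℂ (Hp × Hm)}
    (hLclosed : IsClosed (L : Set (Hp × Hm)))
    (hL : (L : Set (Hp × Hm)) = symCompl (L : Set (Hp × Hm))) :
    ∃ V : Hm →L[ℂ] Hp, (∀ w, (V w, w) ∈ L) ∧ ∀ w, ‖V w‖ ≤ ‖w‖ := by
  have hL' : ∀ x ∈ L, ‖x.1‖ = ‖x.2‖ := fun x => norm_fst_eq_norm_snd_of_mem_lagrangian hL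
  have hsnd : L.map (LinearMap.snd ℂ Hp Hm) = ⊤ := by
    refine Submodule.eq_top_of_isClosed_of_orthogonal_eq_bot _
      (L.isClosed_map_of_norm_map_eq hLclosed _ fun x hx => ?_) ?_
    · simp [Prod.norm_def, max_eq_right (hL' x hx).le]
    rw [Submodule.eq_bot_iff]
    intro b hb
    have h0b : ((0, b) : Hp × Hm) ∈ L := by
      rw [← SetLike.mem_coe, hL]
      intro x hx
      have hbx : inner ℂ b x.2 = 0 :=
        Submodule.inner_left_of_mem_orthogonal (Submodule.mem_map_of_mem hx) hb
      simp [stdForm, hbx]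
    simpa using (hL' _ h0b).symm
  let swap : (Hp × Hm) →ₗ[ℂ] Hm × Hp := LinearEquiv.prodComm ℂ Hp Hm
  obtain ⟨V, hVL, hV⟩ := (L.map swap).exists_continuousLinearMap_of_norm_snd_le 1
    (by rintro _ ⟨x, hx, rfl⟩; simpa [swap] using (hL' x hx).le)
    (by rw [← Submodule.map_comp]; exact hsnd)
  refine ⟨V, fun w => ?_, fun w => by simpa using hV w⟩
  obtain ⟨x, hx, hxw⟩ := hVL w
  rwa [show x = (V w, w) from congrArg Prod.swap hxw] at hx

/-- A maximal completely positive-definite subspace `N` and a Lagrangian subspace `L`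
(`L = L^⊥s`) are transversal: `N ∩ L = {0}` and `N + L = H`. -/
theorem statement5 (N L : Submodule ℂ (Hp × Hm)) (hN : IsMaxCPD N)
    (hLclosed : IsClosed (L : Set (Hp × Hm)))
    (hLlag : (L : Set (Hp × Hm)) = symCompl (L : Set (Hp × Hm))) :
    N ⊓ L = ⊥ ∧ N ⊔ L = ⊤ := by
  obtain ⟨-, k, hk0, hk1, hNk⟩ := (isCPD_iff N).1 hN.1
  have hL : ∀ x ∈ L, ‖x.1‖ = ‖x.2‖ := fun x => norm_fst_eq_norm_snd_of_mem_lagrangian hLlag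
  obtain ⟨T, hTN, hT⟩ := N.exists_continuousLinearMap_of_norm_snd_le k hNk hN.map_fst_eq_top
  obtain ⟨V, hVL, hV⟩ := exists_continuousLinearMap_of_eq_symCompl hLclosed hLlag
  refine ⟨Submodule.inf_eq_bot_of_norm_snd_le hk1 hNk fun x hx => (hL x hx).le,
    Submodule.sup_eq_top_of_graphs T V hTN hVL ?_⟩
  exact ((V.comp T).opNorm_le_bound hk0 fun u => (hV (T u)).trans (hT u)).trans_lt hk1

end
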